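/- arXiv:0708.3707 — 6 statements merged into one kernel-verified Lean document; each statement's English description precedes it below -/
import Mathlib

section
/- Let Γ = (V,E,∂₋,∂₊,ℓ) be a finite oriented graph with edge lengths ℓ : E → (0,∞), G a vertex space and G^⊥ its dual vertex space. Then the 1-form Laplacians satisfy d_G d*_G + d_{G^⊥} d*_{G^⊥} = 2·[ℓ^{-1}] on ℂ^E, i.e. (d_G d*_G η)_e + (d_{G^⊥} d*_{G^⊥} η)_e = (2/ℓ_e)·η_e for all η ∈ ℂ^E and e ∈ E. In particular, if ℓ_e = 1 for all e, then d_{G^⊥} d*_{G^⊥} = 2·id − d_G d*_G, and a number λ is an eigenvalue of d_{G^⊥} d*_{G^⊥} if and only if 2 − λ is an eigenvalue of d_G d*_G. -/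
open ComplexConjugate

/-!
Writing `w_η` for the slot vector `(e, ±) ↦ ±η_e / ℓ_e`, the projections `P_v` of `G` and
`1_{E_v} - P_v` of `G^⊥` add up, vertex by vertex, to the restriction to `E_v`; since every slot
belongs to exactly one vertex, `d*_G η + d*_{G^⊥} η = w_η`. Applying `d` to `w_η` gives
`2 η_e / ℓ_e`. For `ℓ ≡ 1` the two Laplacians sum to `2·id`, so they share eigenvectors with
eigenvalues `λ` and `2 - λ`.
-/

theorem sum_ite_fiber_eq {α β V M : Type*} [Fintype V] [DecidableEq V] [AddCommMonoid M]
    (f : β → α → V) (F : α → β → M) :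
    ∑ v, (fun a b => if f b a = v then F a b else 0) = F := by
  ext a b
  simp only [Finset.sum_apply, Finset.sum_ite_eq, Finset.mem_univ, if_true]

theorem exists_eigen_of_add_eq_const_mul {ι R : Type*} [CommRing R] {A B : (ι → R) → ι → R}
    {c : R} (hAB : ∀ η i, A η i + B η i = c * η i) (lam : R)
    (hA : ∃ η ≠ 0, ∀ i, A η i = lam * η i) : ∃ η ≠ 0, ∀ i, B η i = (c - lam) * η i := by
  obtain ⟨η, hη, heig⟩ := hA
  refine ⟨η, hη, fun i => ?_⟩
  linear_combination hAB η i - heig i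

theorem exists_eigen_iff_of_add_eq_const_mul {ι R : Type*} [CommRing R] {A B : (ι → R) → ι → R}
    {c : R} (hAB : ∀ η i, A η i + B η i = c * η i) (lam : R) :
    (∃ η ≠ 0, ∀ i, A η i = lam * η i) ↔ (∃ η ≠ 0, ∀ i, B η i = (c - lam) * η i) := by
  refine ⟨exists_eigen_of_add_eq_const_mul hAB lam, fun hB => ?_⟩
  have hBA : ∀ η i, B η i + A η i = c * η i := fun η i => by rw [add_comm, hAB]
  simpa using exists_eigen_of_add_eq_const_mul hBA (c - lam) hB

theorem one_form_laplacian_dual_general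
    {V E : Type*} [Fintype V] [Fintype E] [DecidableEq V]
    (bd : Bool → E → V) (ℓ : E → ℝ)
    (P : V → ((E → Bool → ℂ) →ₗ[ℂ] (E → Bool → ℂ)))
    (dstarG dstarGperp : (E → ℂ) → (E → Bool → ℂ))
    (hdstarG : ∀ η, dstarG η
        = ∑ v, P v (fun e b => (ℓ e : ℂ)⁻¹ * (if b then η e else -η e)))
    (hdstarGperp : ∀ η, dstarGperp η
        = ∑ v, ((fun e b => if bd b e = v
                    then (ℓ e : ℂ)⁻¹ * (if b then η e else -η e) else 0)
                 - P v (fun e b => (ℓ e : ℂ)⁻¹ * (if b then η e else -η e)))) :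
    (∀ η e, ((dstarG η e true - dstarG η e false)
              + (dstarGperp η e true - dstarGperp η e false))
            = 2 / (ℓ e : ℂ) * η e)
    ∧ ((∀ e, ℓ e = 1) →
        (∀ η e, dstarGperp η e true - dstarGperp η e false
            = 2 * η e - (dstarG η e true - dstarG η e false))
        ∧ ∀ lam : ℂ,
          ((∃ η : E → ℂ, η ≠ 0 ∧
              ∀ e, dstarGperp η e true - dstarGperp η e false = lam * η e)
            ↔ (∃ η : E → ℂ, η ≠ 0 ∧
              ∀ e, dstarG η e true - dstarG η e false = (2 - lam) * η e))) := by
  have hsum : ∀ η, dstarG η + dstarGperp η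
      = fun e b => (ℓ e : ℂ)⁻¹ * (if b then η e else -η e) := fun η => by
    rw [hdstarG, hdstarGperp, Finset.sum_sub_distrib, add_sub_cancel, sum_ite_fiber_eq]
  have hlap : ∀ η e, (dstarG η e true - dstarG η e false)
      + (dstarGperp η e true - dstarGperp η e false) = 2 / (ℓ e : ℂ) * η e := fun η e => by
    have ht := congrFun (congrFun (hsum η) e) true
    have hf := congrFun (congrFun (hsum η) e) false
    simp only [Pi.add_apply, if_true, Bool.false_eq_true, if_false] at ht hf
    linear_combination ht - hf
  refine ⟨hlap, fun hℓ1 => ?_⟩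
  have hunit : ∀ η e, (dstarGperp η e true - dstarGperp η e false)
      + (dstarG η e true - dstarG η e false) = 2 * η e := fun η e => by
    simpa [hℓ1 e, add_comm] using hlap η e
  exact ⟨fun η e => by linear_combination hunit η e,
    exists_eigen_iff_of_add_eq_const_mul hunit⟩

/-- The 1-form Laplacians of a vertex space `G` and of its dual `G^⊥` satisfy
`d_G d*_G + d_{G^⊥} d*_{G^⊥} = 2·[ℓ⁻¹]`; if all lengths are `1` then
`d_{G^⊥} d*_{G^⊥} = 2·id - d_G d*_G` and `λ` is an eigenvalue of `d_{G^⊥} d*_{G^⊥}` iff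
`2 - λ` is an eigenvalue of `d_G d*_G`.  Slots indexed by `E × Bool`, `(e, true)`
belonging to `bd true e = ∂₊e` and `(e, false)` to `bd false e = ∂₋e`. -/
theorem one_form_laplacian_dual
    {V E : Type*} [Fintype V] [Fintype E] [DecidableEq V]
    (bd : Bool → E → V) (ℓ : E → ℝ) (hℓ : ∀ e, 0 < ℓ e)
    (G : V → Submodule ℂ (E → Bool → ℂ))
    (hGsupp : ∀ v, ∀ F ∈ G v, ∀ e b, bd b e ≠ v → F e b = 0)
    (P : V → ((E → Bool → ℂ) →ₗ[ℂ] (E → Bool → ℂ)))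
    (hPmem : ∀ v F, P v F ∈ G v)
    (hPid : ∀ v, ∀ F ∈ G v, P v F = F)
    (hPsa : ∀ v F H, ∑ e, ∑ b, conj (P v F e b) * H e b
                   = ∑ e, ∑ b, conj (F e b) * P v H e b)
    (dstarG dstarGperp : (E → ℂ) → (E → Bool → ℂ))
    (hdstarG : ∀ η, dstarG η
        = ∑ v, P v (fun e b => (ℓ e : ℂ)⁻¹ * (if b then η e else -η e)))
    (hdstarGperp : ∀ η, dstarGperp η
        = ∑ v, ((fun e b => if bd b e = v
                    then (ℓ e : ℂ)⁻¹ * (if b then η e else -η e) else 0)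
                 - P v (fun e b => (ℓ e : ℂ)⁻¹ * (if b then η e else -η e)))) :
    (∀ η e, ((dstarG η e true - dstarG η e false)
              + (dstarGperp η e true - dstarGperp η e false))
            = 2 / (ℓ e : ℂ) * η e)
    ∧ ((∀ e, ℓ e = 1) →
        (∀ η e, dstarGperp η e true - dstarGperp η e false
            = 2 * η e - (dstarG η e true - dstarG η e false))
        ∧ ∀ lam : ℂ,
          ((∃ η : E → ℂ, η ≠ 0 ∧
              ∀ e, dstarGperp η e true - dstarGperp η e false = lam * η e)
            ↔ (∃ η : E → ℂ, η ≠ 0 ∧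
              ∀ e, dstarG η e true - dstarG η e false = (2 - lam) * η e))) :=
  one_form_laplacian_dual_general bd ℓ P dstarG dstarGperp hdstarG hdstarGperp
end

section
/- Let Γ = (V,E,∂₋,∂₊) be a finite oriented graph with all edge lengths ℓ_e = 1, let G be a vertex space with dual vertex space G^⊥, and let λ ∈ ℂ with λ ∉ {0,2}. Then λ is an eigenvalue of the 0-form Laplacian d*_{G^⊥} d_{G^⊥} on G^⊥ if and only if 2 − λ is an eigenvalue of the 0-form Laplacian d*_G d_G on G. -/
open ComplexConjugate

/-!
Put `η = dF` and `X = η⃗`; then `dX = 2η`, so `d(X - cF) = (2 - c) dF`. Writing `P = ∑ᵥ Pᵥ`,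
we have `d*_G = P ∘ (·⃗)` and `d*_{G^⊥} = (1 - P) ∘ (·⃗)`. If `d*_{G^⊥} dF = λF`, then
`PX = X - λF` lies in `G` and is a `(2 - λ)`-eigenvector of `d*_G d_G`; if `d*_G dF = (2 - λ)F`,
then `X - PX = X - (2 - λ)F` lies in `G^⊥` (the `Pᵥ` are mutually orthogonal) and is a
`λ`-eigenvector of `d*_{G^⊥} d_{G^⊥}`. Neither is zero, since `F ↦ (dF)⃗` has only the
eigenvalues `0` and `2`.
-/

namespace VertexSpace

variable {V E : Type*}

/-- The oriented lift `η⃗`: the slot `(e, true)` at `∂₊e` carries `η e`, the slot `(e, false)`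
at `∂₋e` carries `-η e`. -/
def signedLift (η : E → ℂ) : E → Bool → ℂ := fun e b => if b then η e else -η e

/-- The exterior derivative `d` with unit edge lengths. -/
def slotDiff (F : E → Bool → ℂ) : E → ℂ := fun e => F e true - F e false

def slotInner [Fintype E] (F H : E → Bool → ℂ) : ℂ := ∑ e, ∑ b, conj (F e b) * H e b

def vertexCutoff [DecidableEq V] (bd : Bool → E → V) (v : V) (F : E → Bool → ℂ) :
    E → Bool → ℂ :=
  fun e b => if bd b e = v then F e b else 0

theorem slotInner_self_eq_zero_iff [Fintype E] {F : E → Bool → ℂ} :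
    slotInner F F = 0 ↔ F = 0 := by
  open scoped ComplexOrder in
  have hnonneg : ∀ e b, 0 ≤ conj (F e b) * F e b := fun e b => star_mul_self_nonneg _
  refine ⟨fun h => ?_, fun h => by simp [slotInner, h]⟩
  rw [slotInner, Finset.sum_eq_zero_iff_of_nonneg
    fun e _ => Finset.sum_nonneg fun b _ => hnonneg e b] at h
  funext e b
  have := (Finset.sum_eq_zero_iff_of_nonneg fun b _ => hnonneg e b).1 (h e (Finset.mem_univ _))
    b (Finset.mem_univ _)
  simpa using this

theorem signedLift_smul (c : ℂ) (η : E → ℂ) : signedLift (c • η) = c • signedLift η := by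
  funext e b
  cases b <;> simp [signedLift]

theorem sum_apply_signedLift_smul [Fintype V] (P : V → (E → Bool → ℂ) →ₗ[ℂ] (E → Bool → ℂ))
    (c : ℂ) (η : E → ℂ) : ∑ v, P v (signedLift (c • η)) = c • ∑ v, P v (signedLift η) := by
  simp only [signedLift_smul, map_smul, Finset.smul_sum]

theorem slotDiff_signedLift_slotDiff_sub_smul (c : ℂ) (F : E → Bool → ℂ) :
    slotDiff (signedLift (slotDiff F) - c • F) = (2 - c) • slotDiff F := by
  funext e
  simp only [slotDiff, signedLift, Pi.sub_apply, Pi.smul_apply, smul_eq_mul]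
  simp only [reduceIte, Bool.false_eq_true, ite_false]
  ring

/-- `signedLift ∘ slotDiff` is a direct sum of `2 × 2` blocks with eigenvalues `0` and `2`. -/
theorem eq_zero_of_signedLift_slotDiff_eq_smul {c : ℂ} (hc0 : c ≠ 0) (hc2 : c ≠ 2)
    {F : E → Bool → ℂ} (hF : signedLift (slotDiff F) = c • F) : F = 0 := by
  funext e b
  have ht := congrFun (congrFun hF e) true
  have hf := congrFun (congrFun hF e) false
  simp only [slotDiff, signedLift, Pi.smul_apply, smul_eq_mul, reduceIte,
    Bool.false_eq_true, ite_false] at ht hf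
  have hsum : F e true + F e false = 0 :=
    (mul_eq_zero.1 (by linear_combination -ht - hf : c * (F e true + F e false) = 0)).resolve_left
      hc0
  have htrue : F e true = 0 :=
    (mul_eq_zero.1 (by linear_combination ht + hsum : (2 - c) * F e true = 0)).resolve_left
      (sub_ne_zero.2 hc2.symm)
  cases b
  · simpa [htrue] using hsum
  · exact htrue

section Cutoff

variable [DecidableEq V] [Fintype V] {bd : Bool → E → V}

theorem sum_vertexCutoff (Y : E → Bool → ℂ) : ∑ v, vertexCutoff bd v Y = Y := by
  funext e b
  simp [vertexCutoff, Finset.sum_apply]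

theorem vertexCutoff_sum_proj {G : V → Submodule ℂ (E → Bool → ℂ)}
    {P : V → (E → Bool → ℂ) →ₗ[ℂ] (E → Bool → ℂ)}
    (hGsupp : ∀ v, ∀ F ∈ G v, ∀ e b, bd b e ≠ v → F e b = 0)
    (hPmem : ∀ v F, P v F ∈ G v) (v : V) (X : E → Bool → ℂ) :
    vertexCutoff bd v (∑ w, P w X) = P v X := by
  funext e b
  by_cases h : bd b e = v
  · simp only [vertexCutoff, if_pos h, Finset.sum_apply]
    exact Finset.sum_eq_single_of_mem v (Finset.mem_univ v)
      fun w _ hw => hGsupp w _ (hPmem w X) e b fun he => hw (he.symm.trans h)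
  · simp only [vertexCutoff, if_neg h]
    exact (hGsupp v _ (hPmem v X) e b h).symm

end Cutoff

section Projection

variable [Fintype E] {K : Submodule ℂ (E → Bool → ℂ)} {P : (E → Bool → ℂ) →ₗ[ℂ] (E → Bool → ℂ)}

theorem proj_apply_eq_zero_of_orthogonal (hPmem : ∀ F, P F ∈ K) (hPid : ∀ F ∈ K, P F = F)
    (hPsa : ∀ F H, slotInner (P F) H = slotInner F (P H)) {X : E → Bool → ℂ}
    (hX : ∀ Y ∈ K, slotInner X Y = 0) : P X = 0 :=
  slotInner_self_eq_zero_iff.1 <| by rw [hPsa, hPid _ (hPmem X), hX _ (hPmem X)]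

variable [DecidableEq V] {bd : Bool → E → V} {v : V}

theorem proj_apply_eq_zero_of_vanishes_at
    (hsupp : ∀ F ∈ K, ∀ e b, bd b e ≠ v → F e b = 0) (hPmem : ∀ F, P F ∈ K)
    (hPid : ∀ F ∈ K, P F = F) (hPsa : ∀ F H, slotInner (P F) H = slotInner F (P H))
    {X : E → Bool → ℂ} (hX : ∀ e b, bd b e = v → X e b = 0) : P X = 0 := by
  refine proj_apply_eq_zero_of_orthogonal hPmem hPid hPsa fun Y hY => ?_
  refine Finset.sum_eq_zero fun e _ => Finset.sum_eq_zero fun b _ => ?_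
  by_cases h : bd b e = v
  · simp [hX e b h]
  · simp [hsupp Y hY e b h]

theorem proj_vertexCutoff
    (hsupp : ∀ F ∈ K, ∀ e b, bd b e ≠ v → F e b = 0) (hPmem : ∀ F, P F ∈ K)
    (hPid : ∀ F ∈ K, P F = F) (hPsa : ∀ F H, slotInner (P F) H = slotInner F (P H))
    (Y : E → Bool → ℂ) : P (vertexCutoff bd v Y) = P Y := by
  rw [← sub_eq_zero, ← map_sub]
  refine proj_apply_eq_zero_of_vanishes_at hsupp hPmem hPid hPsa fun e b h => ?_
  simp [vertexCutoff, h]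

end Projection

theorem proj_sum_proj [Fintype E] [DecidableEq V] [Fintype V] {bd : Bool → E → V}
    {G : V → Submodule ℂ (E → Bool → ℂ)} {P : V → (E → Bool → ℂ) →ₗ[ℂ] (E → Bool → ℂ)}
    (hGsupp : ∀ v, ∀ F ∈ G v, ∀ e b, bd b e ≠ v → F e b = 0)
    (hPmem : ∀ v F, P v F ∈ G v) (hPid : ∀ v, ∀ F ∈ G v, P v F = F)
    (hPsa : ∀ v F H, slotInner (P v F) H = slotInner F (P v H)) (v : V)
    (X : E → Bool → ℂ) : P v (∑ w, P w X) = P v X := by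
  rw [← proj_vertexCutoff (hGsupp v) (hPmem v) (hPid v) (hPsa v),
    vertexCutoff_sum_proj hGsupp hPmem, hPid v _ (hPmem v X)]

end VertexSpace

open VertexSpace

/-- Spectral relation for 0-form Laplacians of a vertex space `G` and of its dual `G^⊥`
(all edge lengths equal to `1`): for `λ ∉ {0, 2}`, `λ` is an eigenvalue of
`d*_{G^⊥} d_{G^⊥}` on `G^⊥` iff `2 - λ` is an eigenvalue of `d*_G d_G` on `G`.
Slots indexed by `E × Bool`, `(e, true)` belonging to `bd true e = ∂₊e` and
`(e, false)` to `bd false e = ∂₋e`; membership of `F` in the vertex space `G = ⊕_v G_v`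
means each vertex cutoff of `F` lies in `G_v`, and membership in `G^⊥` means each vertex
cutoff is annihilated by the orthogonal projection `P_v`. -/
theorem zero_form_laplacian_dual_spectrum
    {V E : Type*} [Fintype V] [Fintype E] [DecidableEq V]
    (bd : Bool → E → V)
    (G : V → Submodule ℂ (E → Bool → ℂ))
    (hGsupp : ∀ v, ∀ F ∈ G v, ∀ e b, bd b e ≠ v → F e b = 0)
    (P : V → ((E → Bool → ℂ) →ₗ[ℂ] (E → Bool → ℂ)))
    (hPmem : ∀ v F, P v F ∈ G v)
    (hPid : ∀ v, ∀ F ∈ G v, P v F = F)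
    (hPsa : ∀ v F H, ∑ e, ∑ b, conj (P v F e b) * H e b
                   = ∑ e, ∑ b, conj (F e b) * P v H e b)
    (dstarG dstarGperp : (E → ℂ) → (E → Bool → ℂ))
    (hdstarG : ∀ η, dstarG η = ∑ v, P v (fun e b => if b then η e else -η e))
    (hdstarGperp : ∀ η, dstarGperp η
        = ∑ v, ((fun e b => if bd b e = v then (if b then η e else -η e) else 0)
                 - P v (fun e b => if b then η e else -η e)))
    (lam : ℂ) (hlam0 : lam ≠ 0) (hlam2 : lam ≠ 2) :
    (∃ F : E → Bool → ℂ, F ≠ 0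
        ∧ (∀ v, P v (fun e b => if bd b e = v then F e b else 0) = 0)
        ∧ dstarGperp (fun e => F e true - F e false) = lam • F)
    ↔ (∃ F : E → Bool → ℂ, F ≠ 0
        ∧ (∀ v, (fun e b => if bd b e = v then F e b else 0) ∈ G v)
        ∧ dstarG (fun e => F e true - F e false) = (2 - lam) • F) := by
  have hdG : ∀ η, dstarG η = ∑ v, P v (signedLift η) := hdstarG
  have hdGperp : ∀ η, dstarGperp η = signedLift η - ∑ v, P v (signedLift η) := fun η => by
    rw [hdstarGperp, Finset.sum_sub_distrib]
    exact congrArg (· - _) (sum_vertexCutoff (bd := bd) _)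
  constructor
  · rintro ⟨F, hF0, -, hF⟩
    change dstarGperp (slotDiff F) = lam • F at hF
    set X := signedLift (slotDiff F)
    have hPX : ∑ v, P v X = X - lam • F := by rw [← hF, hdGperp]; abel
    refine ⟨X - lam • F, fun h => hF0 (eq_zero_of_signedLift_slotDiff_eq_smul hlam0 hlam2
      (sub_eq_zero.1 h)), fun v => ?_, ?_⟩
    · change vertexCutoff bd v _ ∈ G v
      rw [← hPX, vertexCutoff_sum_proj hGsupp hPmem]
      exact hPmem v X
    · change dstarG (slotDiff _) = _
      rw [slotDiff_signedLift_slotDiff_sub_smul, hdG, sum_apply_signedLift_smul, hPX]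
  · rintro ⟨F, hF0, -, hF⟩
    change dstarG (slotDiff F) = (2 - lam) • F at hF
    set X := signedLift (slotDiff F)
    rw [hdG] at hF
    have h2lam0 : 2 - lam ≠ 0 := sub_ne_zero.2 (Ne.symm hlam2)
    have h2lam2 : 2 - lam ≠ 2 := by simpa using hlam0
    refine ⟨X - (2 - lam) • F, fun h => hF0 (eq_zero_of_signedLift_slotDiff_eq_smul h2lam0
      h2lam2 (sub_eq_zero.1 h)), fun v => ?_, ?_⟩
    · change P v (vertexCutoff bd v _) = 0
      rw [proj_vertexCutoff (hGsupp v) (hPmem v) (hPid v) (hPsa v), ← hF, map_sub,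
        proj_sum_proj hGsupp hPmem hPid hPsa, sub_self]
    · change dstarGperp (slotDiff _) = _
      rw [slotDiff_signedLift_slotDiff_sub_smul, sub_sub_cancel, hdGperp,
        sum_apply_signedLift_smul, hF, signedLift_smul, smul_sub]
end

section
/- (Discrete Gauß–Bonnet theorem for general vertex spaces.) Let Γ = (V,E,∂₋,∂₊,ℓ) be a finite oriented graph and G = ⊕_v G_v a vertex space. Define the curvature at v ∈ V by κ_G(v) := dim G_v − (deg v)/2 ∈ ℚ. Then the Euler characteristic χ_G(Γ) := dim ker d_G − dim ker d*_G satisfies χ_G(Γ) = Σ_{v∈V} κ_G(v). -/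
/-!
Since `d*_G η ∈ G`, pairing `d_G (d*_G η)` with `η`
gives `‖d*_G η‖²`, so `ker d*_G` is the orthogonal complement of `im d_G` for the weighted inner
product on `ℂ^E`; with rank–nullity, `χ_G(Γ) = dim G − |E|`. Gluing the components identifies
`G` with `⊕_v G_v`, and every edge has two ends, so `Σ_v deg v = 2|E|`.
-/

open ComplexConjugate

open Module LinearMap Finset
open scoped InnerProductSpace

section VertexSpaces

variable {K V E B : Type*} [Field K] [DecidableEq V] {bd : B → E → V}
  {G : V → Submodule K (E → B → K)} {Gtot : Submodule K (E → B → K)}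

theorem restrict_glue_eq (hGsupp : ∀ v, ∀ F ∈ G v, ∀ e b, bd b e ≠ v → F e b = 0)
    (g : ∀ v, G v) (v : V) :
    (fun e b => if bd b e = v then (g (bd b e) : E → B → K) e b else 0) = g v := by
  funext e b
  split_ifs with h
  · subst h; rfl
  · exact (hGsupp v _ (g v).2 e b h).symm

def vertexSpaceEquivPi (hGsupp : ∀ v, ∀ F ∈ G v, ∀ e b, bd b e ≠ v → F e b = 0)
    (hGtot : ∀ F, F ∈ Gtot ↔ ∀ v, (fun e b => if bd b e = v then F e b else 0) ∈ G v) :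
    Gtot ≃ₗ[K] ∀ v, G v where
  toFun F v := ⟨fun e b => if bd b e = v then F.1 e b else 0, (hGtot F).1 F.2 v⟩
  map_add' F F' := by
    funext v; ext e b; simp only [Submodule.coe_add, Pi.add_apply]; split_ifs <;> simp
  map_smul' c F := by
    funext v; ext e b; simp only [Submodule.coe_smul, Pi.smul_apply]; split_ifs <;> simp
  invFun g := ⟨fun e b => (g (bd b e) : E → B → K) e b, (hGtot _).2 fun v => by
    rw [restrict_glue_eq hGsupp]; exact (g v).2⟩
  left_inv F := by ext e b; simp
  right_inv g := by funext v; exact Subtype.ext (restrict_glue_eq hGsupp g v)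

theorem finrank_vertexSpace_eq_sum [Fintype V] [Fintype E] [Fintype B]
    (hGsupp : ∀ v, ∀ F ∈ G v, ∀ e b, bd b e ≠ v → F e b = 0)
    (hGtot : ∀ F, F ∈ Gtot ↔ ∀ v, (fun e b => if bd b e = v then F e b else 0) ∈ G v) :
    finrank K Gtot = ∑ v, finrank K (G v) := by
  rw [(vertexSpaceEquivPi hGsupp hGtot).finrank_eq, Module.finrank_pi_fintype]

end VertexSpaces

theorem sum_card_slots_eq {V E B : Type*} [Fintype V] [Fintype E] [Fintype B] [DecidableEq V]
    (bd : B → E → V) :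
    ∑ v, (univ.filter fun p : E × B => bd p.2 p.1 = v).card = Fintype.card B * Fintype.card E := by
  rw [← card_eq_sum_card_fiberwise (fun _ _ => mem_coe.2 (mem_univ _)), card_univ,
    Fintype.card_prod, mul_comm]

theorem sum_sum_conj_mul_self_eq_zero_iff {ι κ : Type*} [Fintype ι] [Fintype κ] {F : ι → κ → ℂ} :
    ∑ i, ∑ j, conj (F i j) * F i j = 0 ↔ F = 0 := by
  open ComplexOrder in
  have := dotProduct_star_self_eq_zero (v := Function.uncurry F)
  rw [dotProduct, Fintype.sum_prod_type] at this
  simpa [funext_iff] using this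

theorem finrank_ker_add_finrank_eq_of_ker_eq_comap_orthogonal
    {𝕜 M H H' N : Type*} [RCLike 𝕜] [AddCommGroup M] [Module 𝕜 M] [FiniteDimensional 𝕜 M]
    [NormedAddCommGroup H] [InnerProductSpace 𝕜 H] [FiniteDimensional 𝕜 H]
    [AddCommGroup H'] [Module 𝕜 H'] [AddCommGroup N] [Module 𝕜 N]
    {A : M →ₗ[𝕜] H} {B : H' →ₗ[𝕜] N} (T : H' ≃ₗ[𝕜] H)
    (h : ker B = (range A)ᗮ.comap T.toLinearMap) :
    finrank 𝕜 (ker A) + finrank 𝕜 H = finrank 𝕜 M + finrank 𝕜 (ker B) := by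
  have hB : finrank 𝕜 (ker B) = finrank 𝕜 (range A)ᗮ := by
    rw [h, Submodule.comap_equiv_eq_map_symm, LinearEquiv.finrank_map_eq]
  have := (range A).finrank_add_finrank_orthogonal
  have := A.finrank_range_add_finrank_ker
  omega

section WeightedEdgeSpace

variable {E : Type*} (ℓ : E → ℝ) (hℓ : ∀ e, ℓ e ≠ 0)

noncomputable def weightedEquiv : (E → ℂ) ≃ₗ[ℂ] EuclideanSpace ℂ E :=
  LinearEquiv.piCongrRight (fun e => LinearEquiv.smulOfNeZero ℂ ℂ (ℓ e : ℂ)⁻¹ (by simpa using hℓ e))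
    ≪≫ₗ (WithLp.linearEquiv 2 ℂ (E → ℂ)).symm

theorem weightedEquiv_apply (η : E → ℂ) (e : E) : weightedEquiv ℓ hℓ η e = η e / ℓ e :=
  inv_mul_eq_div _ _

theorem inner_toLp_weightedEquiv [Fintype E] (ζ η : E → ℂ) :
    ⟪WithLp.toLp 2 ζ, weightedEquiv ℓ hℓ η⟫_ℂ = ∑ e, conj (ζ e) * η e / ℓ e := by
  simp only [PiLp.inner_apply, RCLike.inner_apply, weightedEquiv_apply]
  exact sum_congr rfl fun e _ => by ring

theorem ker_adjoint_eq_comap_orthogonal_range [Fintype E] {B : Type*} [Fintype B]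
    (S : Submodule ℂ (E → B → ℂ)) (d : S →ₗ[ℂ] (E → ℂ)) (dstar : (E → ℂ) →ₗ[ℂ] (E → B → ℂ))
    (hmem : ∀ η, dstar η ∈ S)
    (hadj : ∀ F : S, ∀ η, ∑ e, conj (d F e) * η e / (ℓ e : ℂ)
      = ∑ e, ∑ b, conj (F.1 e b) * dstar η e b) :
    ker dstar = (range ((WithLp.linearEquiv 2 ℂ (E → ℂ)).symm.toLinearMap ∘ₗ d))ᗮ.comap
      (weightedEquiv ℓ hℓ).toLinearMap := by
  ext η
  have hpair : ∀ F : S, ⟪WithLp.toLp 2 (d F), weightedEquiv ℓ hℓ η⟫_ℂ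
      = ∑ e, ∑ b, conj (F.1 e b) * dstar η e b := fun F => by
    rw [inner_toLp_weightedEquiv, hadj]
  rw [mem_ker, Submodule.mem_comap, Submodule.mem_orthogonal]
  constructor
  · rintro h0 _ ⟨F, rfl⟩
    simpa [h0] using hpair F
  · intro h0
    exact sum_sum_conj_mul_self_eq_zero_iff.1
      ((hpair ⟨dstar η, hmem η⟩).symm.trans (h0 _ ⟨_, rfl⟩))

end WeightedEdgeSpace

/-- Slots are indexed by `E × Bool`: `(e, true)` sits at `bd true e = ∂₊e` and `(e, false)` at
`bd false e = ∂₋e`, so that `deg v = #{(e,b) : bd b e = v}`. -/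
theorem discrete_gauss_bonnet_general
    {V E : Type*} [Fintype V] [Fintype E] [DecidableEq V]
    (bd : Bool → E → V) (ℓ : E → ℝ) (hℓ : ∀ e, 0 < ℓ e)
    (G : V → Submodule ℂ (E → Bool → ℂ))
    (hGsupp : ∀ v, ∀ F ∈ G v, ∀ e b, bd b e ≠ v → F e b = 0)
    (Gtot : Submodule ℂ (E → Bool → ℂ))
    (hGtot : ∀ F, F ∈ Gtot ↔ ∀ v, (fun e b => if bd b e = v then F e b else 0) ∈ G v)
    (dG : (E → Bool → ℂ) →ₗ[ℂ] (E → ℂ))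
    (dstar : (E → ℂ) →ₗ[ℂ] (E → Bool → ℂ))
    (hmem : ∀ η, dstar η ∈ Gtot)
    (hadj : ∀ F ∈ Gtot, ∀ η, ∑ e, conj (dG F e) * η e / (ℓ e : ℂ)
              = ∑ e, ∑ b, conj (F e b) * dstar η e b) :
    (Module.finrank ℂ (LinearMap.ker (dG ∘ₗ Gtot.subtype)) : ℚ)
        - (Module.finrank ℂ (LinearMap.ker dstar) : ℚ)
      = ∑ v, ((Module.finrank ℂ (G v) : ℚ)
          - ((Finset.univ.filter fun p : E × Bool => bd p.2 p.1 = v).card : ℚ) / 2) := by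
  have hℓ0 : ∀ e, ℓ e ≠ 0 := fun e => (hℓ e).ne'
  have hindex := finrank_ker_add_finrank_eq_of_ker_eq_comap_orthogonal (weightedEquiv ℓ hℓ0)
    (ker_adjoint_eq_comap_orthogonal_range ℓ hℓ0 Gtot (dG ∘ₗ Gtot.subtype) dstar hmem
      fun F => hadj F F.2)
  rw [LinearEquiv.ker_comp, finrank_euclideanSpace, finrank_vertexSpace_eq_sum hGsupp hGtot]
    at hindex
  have hdeg := sum_card_slots_eq bd
  rw [Fintype.card_bool] at hdeg
  have hindexQ : (finrank ℂ (ker (dG ∘ₗ Gtot.subtype)) : ℚ) + Fintype.card E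
      = ∑ v, (finrank ℂ (G v) : ℚ) + finrank ℂ (ker dstar) := by exact_mod_cast hindex
  have hdegQ : ∑ v, ((univ.filter fun p : E × Bool => bd p.2 p.1 = v).card : ℚ)
      = 2 * Fintype.card E := by exact_mod_cast hdeg
  rw [Finset.sum_sub_distrib, ← Finset.sum_div, hdegQ]
  linarith

/-- Discrete Gauß–Bonnet theorem for general vertex spaces:
`χ_G(Γ) = dim ker d_G - dim ker d*_G = ∑_v κ_G(v)` with the curvature
`κ_G(v) = dim G_v - (deg v)/2`.  Slots indexed by `E × Bool`, `(e, true)` belonging to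
`bd true e = ∂₊e` and `(e, false)` to `bd false e = ∂₋e`, so that
`deg v = #{(e,b) : bd b e = v}`. -/
theorem discrete_gauss_bonnet
    {V E : Type*} [Fintype V] [Fintype E] [DecidableEq V]
    (bd : Bool → E → V) (ℓ : E → ℝ) (hℓ : ∀ e, 0 < ℓ e)
    (G : V → Submodule ℂ (E → Bool → ℂ))
    (hGsupp : ∀ v, ∀ F ∈ G v, ∀ e b, bd b e ≠ v → F e b = 0)
    (Gtot : Submodule ℂ (E → Bool → ℂ))
    (hGtot : ∀ F, F ∈ Gtot ↔ ∀ v, (fun e b => if bd b e = v then F e b else 0) ∈ G v)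
    (dG : (E → Bool → ℂ) →ₗ[ℂ] (E → ℂ))
    (hdG : ∀ F e, dG F e = F e true - F e false)
    (dstar : (E → ℂ) →ₗ[ℂ] (E → Bool → ℂ))
    (hmem : ∀ η, dstar η ∈ Gtot)
    (hadj : ∀ F ∈ Gtot, ∀ η, ∑ e, conj (dG F e) * η e / (ℓ e : ℂ)
              = ∑ e, ∑ b, conj (F e b) * dstar η e b) :
    (Module.finrank ℂ (LinearMap.ker (dG ∘ₗ Gtot.subtype)) : ℚ)
        - (Module.finrank ℂ (LinearMap.ker dstar) : ℚ)
      = ∑ v, ((Module.finrank ℂ (G v) : ℚ)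
          - ((Finset.univ.filter fun p : E × Bool => bd p.2 p.1 = v).card : ℚ) / 2) :=
  discrete_gauss_bonnet_general bd ℓ hℓ G hGsupp Gtot hGtot dG dstar hmem hadj
end

section
/- Let Γ = (V,E,∂₋,∂₊,ℓ) be a finite oriented graph, G a vertex space with dual vertex space G^⊥, and τG the oriented version of G, where τ : G^max → G^max is the orientation involution (τF)_e(v) = F_e(v) if v = ∂₊e and (τF)_e(v) = −F_e(v) if v = ∂₋e. Then the map ψ : ℂ^E → G^⊥ defined by (ψη)(v) = P_v^⊥({η_e/ℓ_e}_{(e,±)∈E_v}) restricts to a linear isomorphism from ker d*_{τG} onto ker d_{G^⊥}. In particular dim ker d_{G^⊥} = dim ker d*_{τG}, dim ker d*_{G^⊥} = dim ker d_{τG}, and the indices satisfy ind D_{G^⊥} = −ind D_{τG}. -/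
/-!
Slot `(e, true)` is `(e, +)` at `∂₊e = bd true e`, and `(e, false)` is `(e, -)` at
`∂₋e = bd false e`.

Lift `η ∈ ℂ^E` to the slot function `ι η = edgeLift ℓ η = (η_e / ℓ_e)`, equal at both ends of
every edge. Then `⟨dF, η⟩_ℓ = ⟨τF, ιη⟩`, so `ker d*_W` consists of the `η` with `ιη ⊥ τW`. The
total projection `Q = Σ_v P_v` is a self-adjoint idempotent with kernel `G^⊥` and fixed space `G`,
which are therefore each other's orthogonal complements. As `τ(τG) = G`, this gives
`ker d*_{τG} = ι⁻¹(G^⊥)` and `ker d*_{G^⊥} = ι⁻¹(τG)`. Since `ι` is injective with image `ker d`,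
these kernels are isomorphic to the kernels of `d` on `G^⊥` and on `τG`. On `ι⁻¹(G^⊥)` the map
`ψ = ι - Qι` is `ι` itself.
-/

open ComplexConjugate

section SlotInner

variable {α β : Type*} [Fintype α] [Fintype β]

def slotInner (F H : α → β → ℂ) : ℂ := ∑ a, ∑ b, conj (F a b) * H a b

open ComplexOrder in
theorem slotInner_self_eq_zero {F : α → β → ℂ} : slotInner F F = 0 ↔ F = 0 := by
  have hnonneg : ∀ a ∈ Finset.univ, 0 ≤ star (F a) ⬝ᵥ F a :=
    fun a _ => dotProduct_star_self_nonneg _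
  change ∑ a, star (F a) ⬝ᵥ F a = 0 ↔ F = 0
  simp only [Finset.sum_eq_zero_iff_of_nonneg hnonneg, Finset.mem_univ, true_implies,
    dotProduct_star_self_eq_zero, funext_iff, Pi.zero_apply]

@[simp]
theorem slotInner_zero_left (H : α → β → ℂ) : slotInner 0 H = 0 := by simp [slotInner]

@[simp]
theorem slotInner_zero_right (F : α → β → ℂ) : slotInner F 0 = 0 := by simp [slotInner]

theorem slotInner_sub_right (F H K : α → β → ℂ) :
    slotInner F (H - K) = slotInner F H - slotInner F K := by
  simp [slotInner, mul_sub, Finset.sum_sub_distrib]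

theorem slotInner_sum_left {ι : Type*} (s : Finset ι) (F : ι → α → β → ℂ) (H : α → β → ℂ) :
    slotInner (∑ i ∈ s, F i) H = ∑ i ∈ s, slotInner (F i) H := by
  simp only [slotInner, Finset.sum_apply, map_sum, Finset.sum_mul]
  exact (Finset.sum_congr rfl fun _ _ => Finset.sum_comm).trans Finset.sum_comm

theorem slotInner_sum_right {ι : Type*} (s : Finset ι) (F : α → β → ℂ) (H : ι → α → β → ℂ) :
    slotInner F (∑ i ∈ s, H i) = ∑ i ∈ s, slotInner F (H i) := by
  simp only [slotInner, Finset.sum_apply, Finset.mul_sum]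
  exact (Finset.sum_congr rfl fun _ _ => Finset.sum_comm).trans Finset.sum_comm

variable {Q : (α → β → ℂ) →ₗ[ℂ] (α → β → ℂ)}

theorem apply_eq_zero_iff_forall_slotInner_eq_zero
    (hsa : ∀ F H, slotInner (Q F) H = slotInner F (Q H)) (hidem : ∀ F, Q (Q F) = Q F)
    (F : α → β → ℂ) : Q F = 0 ↔ ∀ K, Q K = K → slotInner K F = 0 := by
  refine ⟨fun hF K hK => by rw [← hK, hsa, hF, slotInner_zero_right], fun h => ?_⟩
  refine slotInner_self_eq_zero.1 ?_
  rw [hsa, hidem, ← hsa, h _ (hidem F)]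

theorem apply_eq_self_iff_forall_slotInner_eq_zero
    (hsa : ∀ F H, slotInner (Q F) H = slotInner F (Q H)) (hidem : ∀ F, Q (Q F) = Q F)
    (F : α → β → ℂ) : Q F = F ↔ ∀ K, Q K = 0 → slotInner K F = 0 := by
  refine ⟨fun hF K hK => by rw [← hF, ← hsa, hK, slotInner_zero_left], fun h => ?_⟩
  have hQ : Q (F - Q F) = 0 := by rw [map_sub, hidem, sub_self]
  have hself : slotInner (F - Q F) (F - Q F) = 0 := by
    rw [slotInner_sub_right, h _ hQ, ← hsa, hQ, slotInner_zero_left, sub_zero]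
  exact (sub_eq_zero.1 (slotInner_self_eq_zero.1 hself)).symm

end SlotInner

section Restriction

variable {V E β : Type*} [DecidableEq V]

def restrictAt (bd : β → E → V) (v : V) : (E → β → ℂ) →ₗ[ℂ] (E → β → ℂ) where
  toFun F e b := if bd b e = v then F e b else 0
  map_add' F H := by funext e b; split_ifs <;> simp [*]
  map_smul' c F := by funext e b; split_ifs <;> simp [*]

theorem restrictAt_apply (bd : β → E → V) (v : V) (F : E → β → ℂ) (e : E) (b : β) :
    restrictAt bd v F e b = if bd b e = v then F e b else 0 := rfl

theorem sum_restrictAt [Fintype V] (bd : β → E → V) (F : E → β → ℂ) :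
    ∑ v, restrictAt bd v F = F := by
  funext e b
  simp [Finset.sum_apply, restrictAt_apply]

end Restriction

structure IsVertexSpace {V E β : Type*} [Fintype E] [Fintype β] (bd : β → E → V)
    (G : V → Submodule ℂ (E → β → ℂ)) (P : V → (E → β → ℂ) →ₗ[ℂ] (E → β → ℂ)) : Prop where
  supported : ∀ v, ∀ F ∈ G v, ∀ e b, bd b e ≠ v → F e b = 0
  proj_mem : ∀ v F, P v F ∈ G v
  proj_eq_self : ∀ v, ∀ F ∈ G v, P v F = F
  proj_selfAdjoint : ∀ v F H, slotInner (P v F) H = slotInner F (P v H)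

namespace IsVertexSpace

variable {V E β : Type*} [Fintype E] [Fintype β] {bd : β → E → V}
  {G : V → Submodule ℂ (E → β → ℂ)} {P : V → (E → β → ℂ) →ₗ[ℂ] (E → β → ℂ)}

theorem sum_proj_selfAdjoint [Fintype V] (hG : IsVertexSpace bd G P) (F H : E → β → ℂ) :
    slotInner ((∑ v, P v) F) H = slotInner F ((∑ v, P v) H) := by
  simp only [LinearMap.sum_apply, slotInner_sum_left, slotInner_sum_right, hG.proj_selfAdjoint]

variable [DecidableEq V]

theorem restrictAt_of_mem (hG : IsVertexSpace bd G P) {u v : V} {F : E → β → ℂ}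
    (hF : F ∈ G v) : restrictAt bd u F = if u = v then F else 0 := by
  funext e b
  rw [restrictAt_apply]
  split_ifs with hb huv huv <;> subst_vars
  · rfl
  · exact hG.supported v F hF e b huv
  · exact (hG.supported v F hF e b hb).symm
  · rfl

theorem proj_restrictAt (hG : IsVertexSpace bd G P) (v : V) (F : E → β → ℂ) :
    P v (restrictAt bd v F) = P v F := by
  set D := F - restrictAt bd v F
  -- `D` vanishes at the slots of `v`, where `P v D` lives, so `⟨P v D, P v D⟩ = ⟨D, P v D⟩ = 0`.
  have hD : P v D = 0 := by
    refine slotInner_self_eq_zero.1 ?_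
    rw [hG.proj_selfAdjoint, hG.proj_eq_self v _ (hG.proj_mem v D)]
    refine Finset.sum_eq_zero fun e _ => Finset.sum_eq_zero fun b _ => ?_
    by_cases hb : bd b e = v
    · simp [D, restrictAt_apply, hb]
    · simp [hG.supported v _ (hG.proj_mem v D) e b hb]
  rw [map_sub, sub_eq_zero] at hD
  exact hD.symm

theorem proj_proj (hG : IsVertexSpace bd G P) (u v : V) (F : E → β → ℂ) :
    P u (P v F) = if u = v then P v F else 0 := by
  rw [← hG.proj_restrictAt, hG.restrictAt_of_mem (hG.proj_mem v F)]
  split_ifs with huv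
  · subst huv
    exact hG.proj_eq_self u _ (hG.proj_mem u F)
  · exact map_zero _

variable [Fintype V]

theorem proj_sum_proj (hG : IsVertexSpace bd G P) (u : V) (F : E → β → ℂ) :
    P u ((∑ v, P v) F) = P u F := by
  simp [LinearMap.sum_apply, map_sum, hG.proj_proj]

theorem sum_proj_sum_proj (hG : IsVertexSpace bd G P) (F : E → β → ℂ) :
    (∑ v, P v) ((∑ v, P v) F) = (∑ v, P v) F := by
  conv_lhs => rw [LinearMap.sum_apply]
  simp only [hG.proj_sum_proj, ← LinearMap.sum_apply]

theorem sum_proj_eq_zero_iff (hG : IsVertexSpace bd G P) (F : E → β → ℂ) :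
    (∑ v, P v) F = 0 ↔ ∀ v, P v (restrictAt bd v F) = 0 := by
  simp only [hG.proj_restrictAt]
  refine ⟨fun h u => by rw [← hG.proj_sum_proj, h, map_zero], fun h => ?_⟩
  simp [LinearMap.sum_apply, h]

theorem sum_proj_eq_self_iff (hG : IsVertexSpace bd G P) (F : E → β → ℂ) :
    (∑ v, P v) F = F ↔ ∀ v, restrictAt bd v F ∈ G v := by
  refine ⟨fun h u => ?_, fun h => ?_⟩
  · have hsum : restrictAt bd u ((∑ v, P v) F) = P u F := by
      rw [LinearMap.sum_apply, map_sum,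
        Finset.sum_congr rfl fun v _ => hG.restrictAt_of_mem (hG.proj_mem v F)]
      simp
    rw [← h, hsum]
    exact hG.proj_mem u F
  · conv_rhs => rw [← sum_restrictAt bd F]
    rw [LinearMap.sum_apply]
    refine Finset.sum_congr rfl fun v _ => ?_
    rw [← hG.proj_restrictAt, hG.proj_eq_self v _ (h v)]

end IsVertexSpace

theorem Submodule.mem_map_of_involutive {R M : Type*} [Semiring R] [AddCommMonoid M] [Module R M]
    {f : M →ₗ[R] M} (hf : Function.Involutive f) {p : Submodule R M} {x : M} :
    x ∈ p.map f ↔ f x ∈ p :=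
  ⟨by rintro ⟨y, hy, rfl⟩; rwa [hf], fun h => ⟨f x, h, hf x⟩⟩

section Orientation

variable {E : Type*} {τ : (E → Bool → ℂ) →ₗ[ℂ] (E → Bool → ℂ)}

theorem orient_involutive (hτ : ∀ F e b, τ F e b = if b then F e b else -F e b) :
    Function.Involutive τ := by
  intro F; funext e b; cases b <;> simp [hτ]

theorem restrictAt_orient {V : Type*} [DecidableEq V]
    (hτ : ∀ F e b, τ F e b = if b then F e b else -F e b) (bd : Bool → E → V) (v : V)
    (F : E → Bool → ℂ) : restrictAt bd v (τ F) = τ (restrictAt bd v F) := by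
  funext e b
  by_cases h : bd b e = v <;> cases b <;> simp [hτ, restrictAt_apply, h]

theorem slotInner_orient [Fintype E] (hτ : ∀ F e b, τ F e b = if b then F e b else -F e b)
    (F H : E → Bool → ℂ) : slotInner (τ F) H = slotInner F (τ H) := by
  simp [slotInner, hτ]

theorem IsVertexSpace.forall_restrictAt_mem_map_orient_iff {V : Type*} [Fintype V] [Fintype E]
    [DecidableEq V] {bd : Bool → E → V} {G : V → Submodule ℂ (E → Bool → ℂ)}
    {P : V → (E → Bool → ℂ) →ₗ[ℂ] (E → Bool → ℂ)} (hG : IsVertexSpace bd G P)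
    (hτ : ∀ F e b, τ F e b = if b then F e b else -F e b) (F : E → Bool → ℂ) :
    (∀ v, restrictAt bd v F ∈ (G v).map τ) ↔ (∑ v, P v) (τ F) = τ F := by
  simp only [hG.sum_proj_eq_self_iff, restrictAt_orient hτ,
    Submodule.mem_map_of_involutive (orient_involutive hτ)]

end Orientation

noncomputable section EdgeSpace

variable {E : Type*}

def edgeInner [Fintype E] (ℓ : E → ℝ) (η ζ : E → ℂ) : ℂ := ∑ e, conj (η e) * ζ e / (ℓ e : ℂ)

def edgeLift (ℓ : E → ℝ) : (E → ℂ) →ₗ[ℂ] (E → Bool → ℂ) where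
  toFun η e _ := (ℓ e : ℂ)⁻¹ * η e
  map_add' η ζ := by funext e b; simp [mul_add]
  map_smul' c η := by funext e b; simp [mul_left_comm]

theorem edgeLift_apply (ℓ : E → ℝ) (η : E → ℂ) (e : E) (b : Bool) :
    edgeLift ℓ η e b = (ℓ e : ℂ)⁻¹ * η e := rfl

theorem edgeInner_eq_slotInner_orient_edgeLift [Fintype E] {ℓ : E → ℝ}
    {τ : (E → Bool → ℂ) →ₗ[ℂ] (E → Bool → ℂ)} (hτ : ∀ F e b, τ F e b = if b then F e b else -F e b)
    {d : (E → Bool → ℂ) → (E → ℂ)} (hd : ∀ F e, d F e = F e true - F e false)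
    (F : E → Bool → ℂ) (η : E → ℂ) :
    edgeInner ℓ (d F) η = slotInner (τ F) (edgeLift ℓ η) := by
  refine Finset.sum_congr rfl fun e _ => ?_
  simp only [Fintype.sum_bool, hd, hτ, edgeLift_apply, map_sub, map_neg, if_true,
    Bool.false_eq_true, if_false]
  ring

variable {ℓ : E → ℝ}

theorem edgeLift_injective (hℓ : ∀ e, ℓ e ≠ 0) : Function.Injective (edgeLift ℓ) := by
  intro η ζ h
  funext e
  have he := congrFun (congrFun h e) true
  simp only [edgeLift_apply] at he
  exact mul_left_cancel₀ (inv_ne_zero (Complex.ofReal_ne_zero.2 (hℓ e))) he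

theorem range_edgeLift (hℓ : ∀ e, ℓ e ≠ 0) {d : (E → Bool → ℂ) →ₗ[ℂ] (E → ℂ)}
    (hd : ∀ F e, d F e = F e true - F e false) :
    LinearMap.range (edgeLift ℓ) = LinearMap.ker d := by
  ext F
  have hker : F ∈ LinearMap.ker d ↔ ∀ e, F e true = F e false := by
    simp only [LinearMap.mem_ker, funext_iff, hd, Pi.zero_apply, sub_eq_zero]
  rw [hker]
  refine ⟨by rintro ⟨η, rfl⟩ e; rfl, fun hF => ⟨fun e => (ℓ e : ℂ) * F e true, ?_⟩⟩
  funext e b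
  rw [edgeLift_apply, inv_mul_cancel_left₀ (Complex.ofReal_ne_zero.2 (hℓ e))]
  cases b
  · exact hF e
  · rfl

end EdgeSpace

section Adjoint

variable {E : Type*} [Fintype E] {ℓ : E → ℝ}

theorem adjoint_eq_zero_iff {α β : Type*} [Fintype α] [Fintype β] {d : (α → β → ℂ) → (E → ℂ)}
    {W : Submodule ℂ (α → β → ℂ)} {dstar : (E → ℂ) → (α → β → ℂ)} (hmem : ∀ η, dstar η ∈ W)
    (hadj : ∀ F ∈ W, ∀ η, edgeInner ℓ (d F) η = slotInner F (dstar η)) (η : E → ℂ) :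
    dstar η = 0 ↔ ∀ F ∈ W, edgeInner ℓ (d F) η = 0 := by
  refine ⟨fun h F hF => by rw [hadj F hF, h, slotInner_zero_right], fun h => ?_⟩
  rw [← slotInner_self_eq_zero, ← hadj _ (hmem η), h _ (hmem η)]

variable {Q τ : (E → Bool → ℂ) →ₗ[ℂ] (E → Bool → ℂ)} {d : (E → Bool → ℂ) → (E → ℂ)}
  {W : Submodule ℂ (E → Bool → ℂ)} {dstar : (E → ℂ) → (E → Bool → ℂ)}

theorem adjoint_eq_zero_iff_of_mem_iff_orient_fixed
    (hsa : ∀ F H, slotInner (Q F) H = slotInner F (Q H)) (hidem : ∀ F, Q (Q F) = Q F)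
    (hτ : ∀ F e b, τ F e b = if b then F e b else -F e b)
    (hd : ∀ F e, d F e = F e true - F e false) (hW : ∀ F, F ∈ W ↔ Q (τ F) = τ F)
    (hmem : ∀ η, dstar η ∈ W) (hadj : ∀ F ∈ W, ∀ η, edgeInner ℓ (d F) η = slotInner F (dstar η))
    (η : E → ℂ) : dstar η = 0 ↔ Q (edgeLift ℓ η) = 0 := by
  rw [adjoint_eq_zero_iff hmem hadj, apply_eq_zero_iff_forall_slotInner_eq_zero hsa hidem,
    (orient_involutive hτ).surjective.forall]
  simp only [hW, edgeInner_eq_slotInner_orient_edgeLift hτ hd, orient_involutive hτ _]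

theorem adjoint_eq_zero_iff_of_mem_iff_eq_zero
    (hsa : ∀ F H, slotInner (Q F) H = slotInner F (Q H)) (hidem : ∀ F, Q (Q F) = Q F)
    (hτ : ∀ F e b, τ F e b = if b then F e b else -F e b)
    (hd : ∀ F e, d F e = F e true - F e false) (hW : ∀ F, F ∈ W ↔ Q F = 0)
    (hmem : ∀ η, dstar η ∈ W) (hadj : ∀ F ∈ W, ∀ η, edgeInner ℓ (d F) η = slotInner F (dstar η))
    (η : E → ℂ) : dstar η = 0 ↔ Q (τ (edgeLift ℓ η)) = τ (edgeLift ℓ η) := by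
  rw [adjoint_eq_zero_iff hmem hadj, apply_eq_self_iff_forall_slotInner_eq_zero hsa hidem]
  simp only [hW, edgeInner_eq_slotInner_orient_edgeLift hτ hd, slotInner_orient hτ]

end Adjoint

theorem finrank_ker_eq_finrank_ker_comp_subtype {R M N L L' : Type*} [Ring R] [AddCommGroup M]
    [AddCommGroup N] [AddCommGroup L] [AddCommGroup L'] [Module R M] [Module R N] [Module R L]
    [Module R L'] {ι : N →ₗ[R] M} (hι : Function.Injective ι) {d : M →ₗ[R] L}
    (hrange : LinearMap.range ι = LinearMap.ker d) {W : Submodule R M} {f : N →ₗ[R] L'}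
    (hf : ∀ x, f x = 0 ↔ ι x ∈ W) :
    Module.finrank R (LinearMap.ker f) = Module.finrank R (LinearMap.ker (d ∘ₗ W.subtype)) := by
  rw [show LinearMap.ker f = W.comap ι from Submodule.ext hf,
    (Submodule.equivMapOfInjective ι hι _).finrank_eq, LinearMap.ker_comp,
    (Submodule.equivMapOfInjective W.subtype W.injective_subtype _).finrank_eq,
    Submodule.map_comap_eq, Submodule.map_comap_eq, Submodule.range_subtype, hrange, inf_comm]

/-- Duality between the dual vertex space `G^⊥` and the oriented version `τG`:
the map `(ψη)(v) = P_v^⊥({η_e/ℓ_e})` restricts to a linear isomorphism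
`ker d*_{τG} ≅ ker d_{G^⊥}`; consequently `dim ker d_{G^⊥} = dim ker d*_{τG}`,
`dim ker d*_{G^⊥} = dim ker d_{τG}` and `ind D_{G^⊥} = -ind D_{τG}`.
Slots indexed by `E × Bool`, `(e, true)` belonging to `bd true e = ∂₊e` and `(e, false)`
to `bd false e = ∂₋e`; `τ` negates the values at the slots `(e, false)`. -/
theorem dual_oriented_kernel_isomorphism
    {V E : Type*} [Fintype V] [Fintype E] [DecidableEq V]
    (bd : Bool → E → V) (ℓ : E → ℝ) (hℓ : ∀ e, 0 < ℓ e)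
    -- the vertex space `G = ⊕_v G_v` with orthogonal projections `P_v`
    (G : V → Submodule ℂ (E → Bool → ℂ))
    (hGsupp : ∀ v, ∀ F ∈ G v, ∀ e b, bd b e ≠ v → F e b = 0)
    (P : V → ((E → Bool → ℂ) →ₗ[ℂ] (E → Bool → ℂ)))
    (hPmem : ∀ v F, P v F ∈ G v)
    (hPid : ∀ v, ∀ F ∈ G v, P v F = F)
    (hPsa : ∀ v F H, ∑ e, ∑ b, conj (P v F e b) * H e b
                   = ∑ e, ∑ b, conj (F e b) * P v H e b)
    -- the orientation involution `τ`
    (τ : (E → Bool → ℂ) →ₗ[ℂ] (E → Bool → ℂ))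
    (hτ : ∀ F e b, τ F e b = if b then F e b else -F e b)
    -- the total space of the dual vertex space `G^⊥`
    (GtotPerp : Submodule ℂ (E → Bool → ℂ))
    (hGtotPerp : ∀ F, F ∈ GtotPerp
        ↔ ∀ v, P v (fun e b => if bd b e = v then F e b else 0) = 0)
    -- the total space of the oriented vertex space `τG`
    (GtotTau : Submodule ℂ (E → Bool → ℂ))
    (hGtotTau : ∀ F, F ∈ GtotTau
        ↔ ∀ v, (fun e b => if bd b e = v then F e b else 0) ∈ Submodule.map τ (G v))
    -- the exterior derivative
    (dG : (E → Bool → ℂ) →ₗ[ℂ] (E → ℂ))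
    (hdG : ∀ F e, dG F e = F e true - F e false)
    -- the adjoint of `d` on `τG`
    (dstarTau : (E → ℂ) →ₗ[ℂ] (E → Bool → ℂ))
    (hmemTau : ∀ η, dstarTau η ∈ GtotTau)
    (hadjTau : ∀ F ∈ GtotTau, ∀ η, ∑ e, conj (dG F e) * η e / (ℓ e : ℂ)
              = ∑ e, ∑ b, conj (F e b) * dstarTau η e b)
    -- the adjoint of `d` on `G^⊥`
    (dstarPerp : (E → ℂ) →ₗ[ℂ] (E → Bool → ℂ))
    (hmemPerp : ∀ η, dstarPerp η ∈ GtotPerp)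
    (hadjPerp : ∀ F ∈ GtotPerp, ∀ η, ∑ e, conj (dG F e) * η e / (ℓ e : ℂ)
              = ∑ e, ∑ b, conj (F e b) * dstarPerp η e b)
    -- the comparison map `ψ`
    (ψ : (E → ℂ) →ₗ[ℂ] (E → Bool → ℂ))
    (hψ : ∀ η, ψ η = (fun e b => (ℓ e : ℂ)⁻¹ * η e)
        - ∑ v, P v (fun e b => (ℓ e : ℂ)⁻¹ * η e)) :
    (∀ η, dstarTau η = 0 → ψ η ∈ GtotPerp ∧ dG (ψ η) = 0)
    ∧ (∀ η, dstarTau η = 0 → ψ η = 0 → η = 0)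
    ∧ (∀ F ∈ GtotPerp, dG F = 0 → ∃ η, dstarTau η = 0 ∧ ψ η = F)
    ∧ Module.finrank ℂ (LinearMap.ker (dG ∘ₗ GtotPerp.subtype))
        = Module.finrank ℂ (LinearMap.ker dstarTau)
    ∧ Module.finrank ℂ (LinearMap.ker dstarPerp)
        = Module.finrank ℂ (LinearMap.ker (dG ∘ₗ GtotTau.subtype))
    ∧ (Module.finrank ℂ (LinearMap.ker (dG ∘ₗ GtotPerp.subtype)) : ℤ)
        - (Module.finrank ℂ (LinearMap.ker dstarPerp) : ℤ)
      = -((Module.finrank ℂ (LinearMap.ker (dG ∘ₗ GtotTau.subtype)) : ℤ)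
        - (Module.finrank ℂ (LinearMap.ker dstarTau) : ℤ)) := by
  have hG : IsVertexSpace bd G P := ⟨hGsupp, hPmem, hPid, hPsa⟩
  have hℓ' : ∀ e, ℓ e ≠ 0 := fun e => (hℓ e).ne'
  have hrange := range_edgeLift hℓ' hdG
  have memPerp : ∀ F, F ∈ GtotPerp ↔ (∑ v, P v) F = 0 := fun F =>
    (hGtotPerp F).trans (hG.sum_proj_eq_zero_iff F).symm
  have memTau : ∀ F, F ∈ GtotTau ↔ (∑ v, P v) (τ F) = τ F := fun F =>
    (hGtotTau F).trans (hG.forall_restrictAt_mem_map_orient_iff hτ F)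
  have kerTau : ∀ η, dstarTau η = 0 ↔ edgeLift ℓ η ∈ GtotPerp := fun η =>
    (adjoint_eq_zero_iff_of_mem_iff_orient_fixed hG.sum_proj_selfAdjoint hG.sum_proj_sum_proj
      hτ hdG memTau hmemTau hadjTau η).trans (memPerp _).symm
  have kerPerp : ∀ η, dstarPerp η = 0 ↔ edgeLift ℓ η ∈ GtotTau := fun η =>
    (adjoint_eq_zero_iff_of_mem_iff_eq_zero hG.sum_proj_selfAdjoint hG.sum_proj_sum_proj
      hτ hdG memPerp hmemPerp hadjPerp η).trans (memTau _).symm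
  have ψ_eq_edgeLift : ∀ η, dstarTau η = 0 → ψ η = edgeLift ℓ η := fun η h => by
    rw [hψ, ← LinearMap.sum_apply]
    exact (congrArg _ ((memPerp _).1 ((kerTau η).1 h))).trans (sub_zero _)
  have rankTau := finrank_ker_eq_finrank_ker_comp_subtype (edgeLift_injective hℓ') hrange kerTau
  have rankPerp := finrank_ker_eq_finrank_ker_comp_subtype (edgeLift_injective hℓ') hrange kerPerp
  refine ⟨fun η h => ⟨ψ_eq_edgeLift η h ▸ (kerTau η).1 h, ?_⟩, fun η h h0 => ?_, fun F hF hdF => ?_,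
    rankTau.symm, rankPerp, by omega⟩
  · rw [ψ_eq_edgeLift η h, ← LinearMap.mem_ker, ← hrange]
    exact LinearMap.mem_range_self _ η
  · exact edgeLift_injective hℓ' (by rw [← ψ_eq_edgeLift η h, h0, map_zero])
  · obtain ⟨η, rfl⟩ : F ∈ LinearMap.range (edgeLift ℓ) := hrange ▸ hdF
    exact ⟨η, (kerTau η).2 hF, ψ_eq_edgeLift η ((kerTau η).2 hF)⟩
end

section
/- Let Γ be a finite connected simple graph (no loops or multiple edges) that is d-regular with d ≥ 2 and has at least one edge, and let L(Γ) be its line graph: the vertices of L(Γ) are the edges of Γ, and two distinct edges e, e' of Γ are adjacent in L(Γ) iff they share an endpoint; L(Γ) is (2d−2)-regular. Let Δ_Γ and Δ_{L(Γ)} denote the standard (degree-normalized) Laplacians, (Δ_Γ F)(v) = F(v) − (1/d)Σ_{w∼v} F(w) and (Δ_{L(Γ)} G)(e) = G(e) − (1/(2d−2))Σ_{e'∼e} G(e'). Then the eigenvalue sets satisfy spec(Δ_{L(Γ)}) \ {d/(d−1)} = (d/(2(d−1)))·(spec(Δ_Γ) \ {2}), i.e. λ ≠ d/(d−1) is an eigenvalue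 of Δ_{L(Γ)} if and only if λ = (d/(2(d−1)))·μ for some eigenvalue μ ≠ 2 of Δ_Γ. -/
/-!
Let `B` be the vertex–edge incidence matrix of `Γ`. Then `B Bᵀ = d I + A_Γ` and
`Bᵀ B = 2 I + A_{L(Γ)}`, so an eigenvector of `Δ_Γ` for `μ` is an eigenvector of `B Bᵀ` for
`d (2 - μ)`, and an eigenvector of `Δ_{L(Γ)}` for `λ` is one of `Bᵀ B` for `2d - (2d - 2) λ`.
The products `B Bᵀ` and `Bᵀ B` have the same nonzero eigenvalues, since `B` and `Bᵀ` carry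
eigenvectors of one to eigenvectors of the other; the eigenvalue `0` is exactly the excluded case
`μ = 2`, `λ = d / (d - 1)`.
-/

open Finset Matrix

namespace Matrix

variable {m n R : Type*} [Fintype m] [Fintype n] [CommRing R] [NoZeroDivisors R]

theorem exists_mulVec_eq_smul_of_mul_comm (B : Matrix m n R) (C : Matrix n m R) {c : R}
    (hc : c ≠ 0) (h : ∃ x ≠ 0, (B * C) *ᵥ x = c • x) : ∃ y ≠ 0, (C * B) *ᵥ y = c • y := by
  obtain ⟨x, hx, hBC⟩ := h
  rw [← mulVec_mulVec] at hBC
  refine ⟨C *ᵥ x, fun hCx => ?_, ?_⟩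
  · rw [hCx, mulVec_zero, eq_comm, smul_eq_zero] at hBC
    exact hBC.elim hc hx
  · rw [← mulVec_mulVec, hBC, mulVec_smul]

theorem exists_mulVec_eq_smul_mul_comm_iff (B : Matrix m n R) (C : Matrix n m R) {c : R}
    (hc : c ≠ 0) : (∃ x ≠ 0, (B * C) *ᵥ x = c • x) ↔ ∃ y ≠ 0, (C * B) *ᵥ y = c • y :=
  ⟨exists_mulVec_eq_smul_of_mul_comm B C hc, exists_mulVec_eq_smul_of_mul_comm C B hc⟩

theorem forall_sub_one_div_mul_mulVec_eq_iff {ι K : Type*} [Fintype ι] [DecidableEq ι] [Field K]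
    (A : Matrix ι ι K) {k : K} (hk : k ≠ 0) (s lam : K) (x : ι → K) :
    (∀ i, x i - 1 / k * (A *ᵥ x) i = lam * x i) ↔
      (diagonal (fun _ => s) + A) *ᵥ x = (s + k * (1 - lam)) • x := by
  rw [funext_iff]
  refine forall_congr' fun i => ?_
  simp only [add_mulVec, Pi.add_apply, mulVec_diagonal, Pi.smul_apply, smul_eq_mul]
  have hk' : k * (1 / k) = 1 := mul_one_div_cancel hk
  constructor <;> intro h
  · linear_combination (-k) * h - (A *ᵥ x) i * hk'
  · linear_combination (-1 / k) * h + (lam * x i - x i) * hk'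

end Matrix

namespace SimpleGraph

variable {V R : Type*} [Fintype V] [DecidableEq V] (G : SimpleGraph V) [DecidableRel G.Adj]

def edgeIncMatrix (R : Type*) [Zero R] [One R] : Matrix V G.edgeSet R :=
  (G.incMatrix R).submatrix id (↑)

theorem edgeIncMatrix_mul_transpose [Semiring R] :
    G.edgeIncMatrix R * (G.edgeIncMatrix R)ᵀ = G.degMatrix R + G.adjMatrix R := by
  have hsum : G.edgeIncMatrix R * (G.edgeIncMatrix R)ᵀ = G.incMatrix R * (G.incMatrix R)ᵀ := by
    ext a b
    simp only [edgeIncMatrix, mul_apply, transpose_apply, submatrix_apply, id]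
    rw [← sum_subtype G.edgeFinset (fun e => G.mem_edgeFinset)
      (fun e => G.incMatrix R a e * G.incMatrix R b e)]
    refine sum_subset (subset_univ _) fun e _ he => ?_
    rw [incMatrix_of_notMem_incidenceSet, zero_mul]
    exact fun h => he (by simpa using h.1)
  rw [hsum, incMatrix_mul_transpose]
  ext a b
  by_cases hab : a = b
  · subst hab; simp [degMatrix]
  · simp [degMatrix, hab, adjMatrix_apply]

theorem sum_incMatrix_mul_incMatrix_of_ne [Semiring R] [DecidableRel G.lineGraph.Adj]
    {e e' : G.edgeSet} (hne : e ≠ e') :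
    ∑ v, G.incMatrix R v e * G.incMatrix R v e' = if G.lineGraph.Adj e e' then 1 else 0 := by
  have hinc : ∀ (v : V) (f : G.edgeSet), G.incMatrix R v f = if v ∈ (f : Sym2 V) then 1 else 0 :=
    fun v f => by simp [incMatrix_apply', incidenceSet, f.2]
  simp only [hinc, ite_zero_mul_ite_zero, one_mul, sum_boole, lineGraph_adj_iff_exists, hne,
    ne_eq, not_false_eq_true, true_and]
  by_cases hshared : ∃ v, v ∈ (e : Sym2 V) ∧ v ∈ (e' : Sym2 V)
  · obtain ⟨v, hv, hv'⟩ := hshared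
    have hsingle : ({u | u ∈ (e : Sym2 V) ∧ u ∈ (e' : Sym2 V)} : Finset V) = {v} := by
      refine eq_singleton_iff_unique_mem.mpr ⟨by simp [hv, hv'], fun u hu => ?_⟩
      simp only [mem_filter, mem_univ, true_and] at hu
      by_contra huv
      exact hne (Subtype.ext <| ((Sym2.mem_and_mem_iff huv).mp ⟨hu.1, hv⟩).trans
        ((Sym2.mem_and_mem_iff huv).mp ⟨hu.2, hv'⟩).symm)
    rw [hsingle, if_pos ⟨v, hv, hv'⟩, card_singleton, Nat.cast_one]
  · rw [if_neg hshared, filter_false_of_mem fun u _ hu => hshared ⟨u, hu⟩, card_empty,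
      Nat.cast_zero]

theorem transpose_edgeIncMatrix_mul [Semiring R] [DecidableRel G.lineGraph.Adj] :
    (G.edgeIncMatrix R)ᵀ * G.edgeIncMatrix R =
      diagonal (fun _ => 2) + G.lineGraph.adjMatrix R := by
  ext e e'
  simp only [edgeIncMatrix, mul_apply, transpose_apply, submatrix_apply, id, Matrix.add_apply]
  by_cases hee' : e = e'
  · subst hee'
    simpa [mul_apply, e.2] using G.incMatrix_transpose_mul_diag (R := R) (e := e)
  · simp [hee', G.sum_incMatrix_mul_incMatrix_of_ne hee']

theorem IsRegularOfDegree.degMatrix_eq [AddMonoidWithOne R] {d : ℕ} (h : G.IsRegularOfDegree d) :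
    G.degMatrix R = diagonal fun _ => (d : R) := by
  simp [degMatrix, h.degree_eq]

theorem lineGraph_adjMatrix_mulVec_apply [NonAssocSemiring R] [DecidableRel G.lineGraph.Adj]
    (x : G.edgeSet → R) (e : G.edgeSet) :
    (G.lineGraph.adjMatrix R *ᵥ x) e =
      ∑ e' : G.edgeSet, if e' ≠ e ∧ ∃ v, v ∈ (e' : Sym2 V) ∧ v ∈ (e : Sym2 V) then x e' else 0 := by
  simp only [mulVec, dotProduct, adjMatrix_apply, ite_mul, one_mul, zero_mul]
  refine sum_congr rfl fun e' _ => if_congr ?_ rfl rfl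
  rw [G.lineGraph.adj_comm, lineGraph_adj_iff_exists]

theorem transpose_edgeIncMatrix_mul_mulVec_eq_smul_iff {K : Type*} [Field K] {k : K}
    (hk : k ≠ 0) (lam : K) (x : G.edgeSet → K) :
    (∀ e : G.edgeSet, x e - 1 / k * ∑ e' : G.edgeSet,
        (if e' ≠ e ∧ ∃ v, v ∈ (e' : Sym2 V) ∧ v ∈ (e : Sym2 V) then x e' else 0) = lam * x e) ↔
      ((G.edgeIncMatrix K)ᵀ * G.edgeIncMatrix K) *ᵥ x = (2 + k * (1 - lam)) • x := by
  classical
  simp only [← lineGraph_adjMatrix_mulVec_apply, transpose_edgeIncMatrix_mul]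
  exact Matrix.forall_sub_one_div_mul_mulVec_eq_iff _ hk 2 lam x

theorem edgeIncMatrix_mul_transpose_mulVec_eq_smul_iff {K : Type*} [Field K] {d : ℕ}
    (hreg : G.IsRegularOfDegree d) (hd : (d : K) ≠ 0) (ν : K) (x : V → K) :
    (∀ v, x v - 1 / (d : K) * ∑ w ∈ G.neighborFinset v, x w = ν * x v) ↔
      (G.edgeIncMatrix K * (G.edgeIncMatrix K)ᵀ) *ᵥ x = (d + d * (1 - ν)) • x := by
  simp only [edgeIncMatrix_mul_transpose, hreg.degMatrix_eq,
    ← Matrix.forall_sub_one_div_mul_mulVec_eq_iff _ hd, adjMatrix_mulVec_apply]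

end SimpleGraph

open SimpleGraph

theorem line_graph_laplacian_spectrum_general
    {V : Type*} [Fintype V] [DecidableEq V]
    (Γ : SimpleGraph V) [DecidableRel Γ.Adj]
    (d : ℕ) (hd : 2 ≤ d) (hreg : Γ.IsRegularOfDegree d)
    (lam : ℂ) (hlam : lam ≠ (d : ℂ) / ((d : ℂ) - 1)) :
    (∃ G : Γ.edgeSet → ℂ, G ≠ 0 ∧ ∀ e : Γ.edgeSet,
        G e - (1 / (2 * (d : ℂ) - 2)) * ∑ e' : Γ.edgeSet,
          (if e' ≠ e ∧ ∃ v, v ∈ (e' : Sym2 V) ∧ v ∈ (e : Sym2 V) then G e' else 0)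
        = lam * G e)
    ↔ (∃ μ : ℂ, μ ≠ 2
        ∧ (∃ F : V → ℂ, F ≠ 0 ∧ ∀ v,
            F v - (1 / (d : ℂ)) * ∑ w ∈ Γ.neighborFinset v, F w = μ * F v)
        ∧ lam = ((d : ℂ) / (2 * ((d : ℂ) - 1))) * μ) := by
  have hd0 : (d : ℂ) ≠ 0 := by exact_mod_cast (by omega : d ≠ 0)
  have hd1 : (d : ℂ) - 1 ≠ 0 := sub_ne_zero.mpr (by exact_mod_cast (by omega : d ≠ 1))
  have hk : 2 * (d : ℂ) - 2 ≠ 0 := by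
    rw [show 2 * (d : ℂ) - 2 = 2 * (d - 1) by ring]
    exact mul_ne_zero two_ne_zero hd1
  set B := Γ.edgeIncMatrix ℂ
  set c : ℂ := 2 + (2 * d - 2) * (1 - lam)
  set μ : ℂ := lam / (d / (2 * (d - 1)))
  have hc : c ≠ 0 := fun h => hlam (by rw [eq_div_iff hd1]; linear_combination (-1 / 2 : ℂ) * h)
  have hcμ : c = d + d * (1 - μ) := by simp only [c, μ]; field_simp; ring
  calc _ ↔ ∃ G ≠ 0, (Bᵀ * B) *ᵥ G = c • G := by
        simp only [transpose_edgeIncMatrix_mul_mulVec_eq_smul_iff Γ hk, B, c]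
    _ ↔ ∃ F ≠ 0, (B * Bᵀ) *ᵥ F = c • F := (Matrix.exists_mulVec_eq_smul_mul_comm_iff _ _ hc).symm
    _ ↔ ∃ F : V → ℂ, F ≠ 0 ∧ ∀ v,
          F v - (1 / (d : ℂ)) * ∑ w ∈ Γ.neighborFinset v, F w = μ * F v := by
      simp only [edgeIncMatrix_mul_transpose_mulVec_eq_smul_iff Γ hreg hd0, B, hcμ]
    _ ↔ _ := by
      refine ⟨fun hF => ⟨μ, fun h => hc ?_, hF, ?_⟩, fun ⟨ν, _, hF, hν⟩ => ?_⟩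
      · rw [hcμ, h]; ring
      · simp only [μ]; field_simp
      · have hμν : μ = ν := by simp only [μ, hν]; field_simp
        rwa [hμν]

/-- Spectral relation between the degree-normalized Laplacian of a finite connected simple
`d`-regular graph (`d ≥ 2`, at least one edge) and that of its line graph:
`λ ≠ d/(d-1)` is an eigenvalue of `Δ_{L(Γ)}` iff `λ = (d/(2(d-1)))·μ` for some eigenvalue
`μ ≠ 2` of `Δ_Γ`. -/
theorem line_graph_laplacian_spectrum
    {V : Type*} [Fintype V] [DecidableEq V]
    (Γ : SimpleGraph V) [DecidableRel Γ.Adj]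
    (hconn : Γ.Connected)
    (d : ℕ) (hd : 2 ≤ d) (hreg : Γ.IsRegularOfDegree d)
    (hedge : Γ.edgeSet.Nonempty)
    (lam : ℂ) (hlam : lam ≠ (d : ℂ) / ((d : ℂ) - 1)) :
    (∃ G : Γ.edgeSet → ℂ, G ≠ 0 ∧ ∀ e : Γ.edgeSet,
        G e - (1 / (2 * (d : ℂ) - 2)) * ∑ e' : Γ.edgeSet,
          (if e' ≠ e ∧ ∃ v, v ∈ (e' : Sym2 V) ∧ v ∈ (e : Sym2 V) then G e' else 0)
        = lam * G e)
    ↔ (∃ μ : ℂ, μ ≠ 2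
        ∧ (∃ F : V → ℂ, F ≠ 0 ∧ ∀ v,
            F v - (1 / (d : ℂ)) * ∑ w ∈ Γ.neighborFinset v, F w = μ * F v)
        ∧ lam = ((d : ℂ) / (2 * ((d : ℂ) - 1))) * μ) :=
  line_graph_laplacian_spectrum_general Γ d hd hreg lam hlam
end

section
/- Let Γ be a finite simple graph (no loops or multiple edges) in which every vertex has degree ≥ 1, and let S(Γ) be its subdivision graph: the vertex set of S(Γ) is V(Γ) ⊔ E(Γ) and its edges are the pairs {v,e} with v an endpoint of e in Γ. Let Δ_Γ and Δ_{S(Γ)} denote the standard (degree-normalized) Laplacians of Γ and S(Γ), and set η(λ) := 2λ(2−λ). Then the eigenvalue sets satisfy spec(Δ_{S(Γ)}) \ {1} = η^{-1}(spec(Δ_Γ) \ {2}), i.e. λ ≠ 1 is an eigenvalue of Δ_{S(Γ)} if and only if η(λ) ≠ 2 and η(λ) is an eigenvalue of Δ_Γ. -/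
/-!
For `λ ≠ 1` the eigenvalue equation of `Δ_{S(Γ)}` at an edge `e = {a, b}` determines the value
there, `H e = (H a + H b) / (2(1 - λ))`, so an eigenfunction is determined by its restriction `F`
to `V`. Substituting into the equation at a vertex turns it into `2(1 - λ)² F = F + A F`, with `A`
the neighbour-averaging operator, i.e. `Δ_Γ F = (2 - 2(1 - λ)²) F = η(λ) F`. Finally
`η(λ) - 2 = -2(λ - 1)²`, so the side condition `η(λ) ≠ 2` is just `λ ≠ 1`.
-/

open Finset

lemma Sym2.sum_ite_mem_mk {α M : Type*} [Fintype α] [DecidableEq α] [AddCommMonoid M]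
    (f : α → M) {a b : α} (h : a ≠ b) :
    ∑ u, (if u ∈ s(a, b) then f u else 0) = f a + f b := by
  rw [← sum_filter, show ({u | u ∈ s(a, b)} : Finset α) = {a, b} by ext; simp, sum_pair h]

lemma two_mul_mul_two_sub_ne_two_iff {K : Type*} [Field K] [CharZero K] {x : K} :
    2 * x * (2 - x) ≠ 2 ↔ x ≠ 1 := by
  refine not_congr ⟨fun h => ?_, fun h => by rw [h]; norm_num⟩
  have : (x - 1) ^ 2 = 0 := by linear_combination (-1 / 2 : K) * h
  exact sub_eq_zero.mp (pow_eq_zero_iff two_ne_zero |>.mp this)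

namespace SimpleGraph

section Incidence

variable {V : Type*} [Fintype V] [DecidableEq V] (Γ : SimpleGraph V) [DecidableRel Γ.Adj]
  {M : Type*} [AddCommMonoid M]

lemma incidenceFinset_eq_image_neighborFinset (v : V) :
    Γ.incidenceFinset v = (Γ.neighborFinset v).image (s(v, ·)) := by
  ext e
  induction e using Sym2.ind with
  | h a b =>
    simp only [mem_incidenceFinset, mk'_mem_incidenceSet_iff, mem_image, mem_neighborFinset,
      Sym2.eq_iff]
    grind [adj_comm]

lemma sum_edgeSet_ite_mem (v : V) (f : Sym2 V → M) :
    ∑ e : Γ.edgeSet, (if v ∈ (e : Sym2 V) then f e else 0) =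
      ∑ w ∈ Γ.neighborFinset v, f s(v, w) := by
  rw [sum_set_coe (f := fun e => if v ∈ e then f e else 0), ← sum_filter]
  change ∑ e ∈ {e ∈ Γ.edgeFinset | v ∈ e}, f e = _
  rw [← incidenceFinset_eq_filter, incidenceFinset_eq_image_neighborFinset,
    sum_image fun _ _ _ _ => Sym2.congr_right.mp]

lemma sum_neighborFinset_sum_ite_mem (F : V → M) (v : V) :
    ∑ w ∈ Γ.neighborFinset v, ∑ u, (if u ∈ s(v, w) then F u else 0) =
      Γ.degree v • F v + ∑ w ∈ Γ.neighborFinset v, F w := by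
  rw [sum_congr rfl fun w hw => Sym2.sum_ite_mem_mk F (Γ.ne_of_adj ((mem_neighborFinset ..).mp hw)),
    sum_add_distrib, sum_const, card_neighborFinset_eq_degree]

end Incidence

variable {V : Type*} [Fintype V] [DecidableEq V] (Γ : SimpleGraph V) {K : Type*} [Field K]

/-- The extension of `F : V → K` to `V ⊕ E(Γ)` solving the eigenvalue equation of `Δ_{S(Γ)}` for
`lam` at every edge. -/
def subdivisionLift (lam : K) (F : V → K) : V ⊕ Γ.edgeSet → K :=
  Sum.elim F fun e => (∑ u, if u ∈ (e : Sym2 V) then F u else 0) / (2 * (1 - lam))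

variable {Γ}

lemma subdivisionLift_eq_zero_iff {lam : K} {F : V → K} :
    Γ.subdivisionLift lam F = 0 ↔ F = 0 := by
  refine ⟨fun h => funext fun v => congrFun h (Sum.inl v), ?_⟩
  rintro rfl
  funext x
  cases x <;> simp [subdivisionLift]

lemma forall_edge_eigen_eq_iff [CharZero K] {lam : K} (hlam : lam ≠ 1) (H : V ⊕ Γ.edgeSet → K) :
    (∀ e : Γ.edgeSet, H (Sum.inr e) - (1 / 2) *
        ∑ v : V, (if v ∈ (e : Sym2 V) then H (Sum.inl v) else 0) = lam * H (Sum.inr e)) ↔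
      H = Γ.subdivisionLift lam (H ∘ Sum.inl) := by
  have hc : (2 * (1 - lam) : K) ≠ 0 := mul_ne_zero two_ne_zero (sub_ne_zero.mpr hlam.symm)
  have key : ∀ x s : K, x - 1 / 2 * s = lam * x ↔ x = s / (2 * (1 - lam)) := fun x s => by
    rw [eq_div_iff hc]
    exact ⟨fun h => by linear_combination 2 * h, fun h => by linear_combination h / 2⟩
  constructor
  · intro he
    funext x
    cases x with
    | inl v => rfl
    | inr e => exact (key _ _).mp (he e)
  · intro h e
    exact (key _ _).mpr (congrFun h (Sum.inr e))

lemma subdivisionLift_vertex_eigen_iff [DecidableRel Γ.Adj] [CharZero K] {lam : K}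
    (hlam : lam ≠ 1) (F : V → K) {v : V} (hd : (Γ.degree v : K) ≠ 0) :
    Γ.subdivisionLift lam F (Sum.inl v) - (1 / (Γ.degree v : K)) *
        ∑ e : Γ.edgeSet, (if v ∈ (e : Sym2 V) then Γ.subdivisionLift lam F (Sum.inr e) else 0) =
          lam * Γ.subdivisionLift lam F (Sum.inl v) ↔
      F v - (1 / (Γ.degree v : K)) * ∑ w ∈ Γ.neighborFinset v, F w =
        2 * lam * (2 - lam) * F v := by
  have hc : (2 * (1 - lam) : K) ≠ 0 := mul_ne_zero two_ne_zero (sub_ne_zero.mpr hlam.symm)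
  simp only [subdivisionLift, Sum.elim_inl, Sum.elim_inr]
  rw [sum_edgeSet_ite_mem Γ v fun e => (∑ u, if u ∈ e then F u else 0) / (2 * (1 - lam)),
    ← sum_div, sum_neighborFinset_sum_ite_mem, nsmul_eq_mul]
  set N := ∑ w ∈ Γ.neighborFinset v, F w
  have key : F v - 1 / (Γ.degree v : K) * ((Γ.degree v * F v + N) / (2 * (1 - lam))) -
      lam * F v = (F v - 1 / (Γ.degree v : K) * N - 2 * lam * (2 - lam) * F v) /
        (2 * (1 - lam)) := by
    field_simp
    ring
  rw [← sub_eq_zero, key, div_eq_zero_iff, or_iff_left hc, sub_eq_zero]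

end SimpleGraph

/-- Spectral relation between the degree-normalized Laplacian of a finite simple graph `Γ`
(all degrees positive) and that of its subdivision graph `S(Γ)` (vertex set `V ⊕ E(Γ)`,
edges `{v, e}` for `v` an endpoint of `e`): with `η(λ) = 2λ(2-λ)`, a number `λ ≠ 1` is an
eigenvalue of `Δ_{S(Γ)}` iff `η(λ) ≠ 2` and `η(λ)` is an eigenvalue of `Δ_Γ`. -/
theorem subdivision_graph_laplacian_spectrum
    {V : Type*} [Fintype V] [DecidableEq V]
    (Γ : SimpleGraph V) [DecidableRel Γ.Adj]
    (hdeg : ∀ v, 0 < Γ.degree v)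
    (lam : ℂ) (hlam : lam ≠ 1) :
    (∃ H : (V ⊕ Γ.edgeSet) → ℂ, H ≠ 0
      ∧ (∀ v : V, H (Sum.inl v) - (1 / (Γ.degree v : ℂ)) *
            ∑ e : Γ.edgeSet, (if v ∈ (e : Sym2 V) then H (Sum.inr e) else 0)
          = lam * H (Sum.inl v))
      ∧ (∀ e : Γ.edgeSet, H (Sum.inr e) - (1 / 2) *
            ∑ v : V, (if v ∈ (e : Sym2 V) then H (Sum.inl v) else 0)
          = lam * H (Sum.inr e)))
    ↔ (2 * lam * (2 - lam) ≠ 2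
        ∧ ∃ F : V → ℂ, F ≠ 0 ∧ ∀ v,
            F v - (1 / (Γ.degree v : ℂ)) * ∑ w ∈ Γ.neighborFinset v, F w
              = (2 * lam * (2 - lam)) * F v) := by
  have hd : ∀ v, (Γ.degree v : ℂ) ≠ 0 := fun v => Nat.cast_ne_zero.mpr (hdeg v).ne'
  rw [two_mul_mul_two_sub_ne_two_iff]
  constructor
  · rintro ⟨H, hH0, hv, he⟩
    obtain ⟨F, rfl⟩ : ∃ F, H = Γ.subdivisionLift lam F :=
      ⟨_, (SimpleGraph.forall_edge_eigen_eq_iff hlam H).mp he⟩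
    exact ⟨hlam, F, mt SimpleGraph.subdivisionLift_eq_zero_iff.mpr hH0,
      fun v => (SimpleGraph.subdivisionLift_vertex_eigen_iff hlam F (hd v)).mp (hv v)⟩
  · rintro ⟨-, F, hF0, hF⟩
    exact ⟨Γ.subdivisionLift lam F, mt SimpleGraph.subdivisionLift_eq_zero_iff.mp hF0,
      fun v => (SimpleGraph.subdivisionLift_vertex_eigen_iff hlam F (hd v)).mpr (hF v),
      (SimpleGraph.forall_edge_eigen_eq_iff hlam _).mpr rfl⟩
end
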